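/- arXiv:2212.13551 — 2 statements merged into one kernel-verified Lean document; each statement's English description precedes it below -/
import Mathlib

section
/- For all positive integers T, t, the function g_{T,t} is 37-smooth: it is differentiable and ‖∇g_{T,t}(x₁) − ∇g_{T,t}(x₂)‖ ≤ 37‖x₁ − x₂‖ for all x₁, x₂ ∈ ℝ^{Tt}. -/
/-- The `k`-th coordinate (1-indexed) of `x ∈ ℝ^d`, with out-of-range coordinates
(including the convention `x_0 = 0`) equal to `0`. -/
noncomputable def coord {d : ℕ} (x : EuclideanSpace ℝ (Fin d)) (k : ℕ) : ℝ :=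
  if h : 1 ≤ k ∧ k ≤ d then x ⟨k - 1, by omega⟩ else 0

/-- The piecewise scalar component `v_y` of the hard instance. -/
noncomputable def vFun (y x : ℝ) : ℝ :=
  if x ≤ 31 / 32 * y then x ^ 2 / 2
  else if x ≤ y then x ^ 2 / 2 - 16 * (x - 31 / 32 * y) ^ 2
  else if x ≤ 33 / 32 * y then x ^ 2 / 2 - y ^ 2 / 32 + 16 * (x - 33 / 32 * y) ^ 2
  else x ^ 2 / 2 - y ^ 2 / 32

/-- The quadratic (convex) part `q_{T,t}` of the hard instance, with the convention
`x_0 = 0` (encoded by `coord x 0 = 0`). -/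
noncomputable def qFun (T t : ℕ) (x : EuclideanSpace ℝ (Fin (T * t))) : ℝ :=
  (1 / 2) * ∑ i ∈ Finset.range t,
    ((7 / 8 * coord x (i * T) - coord x (i * T + 1)) ^ 2
      + ∑ j ∈ Finset.Icc 1 (T - 1), (coord x (i * T + j + 1) - coord x (i * T + j)) ^ 2)

/-- The reference vector `y ∈ ℝ^{Tt}` with `y_{qT+b} = (7/8)^q` for `b ∈ {1, …, T}`;
in 0-based indexing, `y i = (7/8)^(i / T)`. -/
noncomputable def yVec (T t : ℕ) : EuclideanSpace ℝ (Fin (T * t)) :=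
  WithLp.toLp 2 (fun i => (7 / 8 : ℝ) ^ ((i : ℕ) / T))

/-- The hard instance `g_{T,t}(x) = q_{T,t}(x) + Σ_{i=1}^{Tt} v_{y_i}(x_i)`. -/
noncomputable def gFun (T t : ℕ) (x : EuclideanSpace ℝ (Fin (T * t))) : ℝ :=
  qFun T t x + ∑ i : Fin (T * t), vFun (yVec T t i) (x i)

/-!
Write `g(x) = ‖B x‖² / 2 + Σ_i v_{y_i}(x_i)`, where `B` is the bidiagonal map
`(B x)_k = c_k x_{k-1} - x_k` (with `x_0 = 0` and `c_k ∈ {7/8, 1}`). Since `|c_k| ≤ 1`, `‖B‖ ≤ 2`, so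
the gradient `Bᵀ B x` of the quadratic part is `4`-Lipschitz. With the `C¹` function `φ(u) = (u⁺)²`,
`v_y(x) = x²/2 - 16 φ(x - 31y/32) + 32 φ(x - y) - 16 φ(x - 33y/32)`, so `v_y' = x - 32 · tent` for a
`1`-Lipschitz tent function, and `v_y'` is `33`-Lipschitz. The gradient of the separable part acts
coordinatewise, hence is `33`-Lipschitz as well, and `4 + 33 = 37`.
-/

section QuadraticForm

variable {E F : Type*} [NormedAddCommGroup E] [NormedSpace ℝ E]
  [NormedAddCommGroup F] [InnerProductSpace ℝ F]

theorem hasFDerivAt_norm_sq_comp_div_two (B : E →L[ℝ] F) (x : E) :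
    HasFDerivAt (fun z => ‖B z‖ ^ 2 / 2) ((innerSL ℝ (B x)).comp B) x := by
  have h := (B.hasFDerivAt (x := x)).norm_sq.const_mul (1 / 2 : ℝ)
  refine (h.congr_fderiv ?_).congr_of_eventuallyEq (.of_forall fun z => ?_)
  · module
  · ring

theorem norm_innerSL_comp_sub_le (B : E →L[ℝ] F) (x₁ x₂ : E) :
    ‖(innerSL ℝ (B x₁)).comp B - (innerSL ℝ (B x₂)).comp B‖ ≤ ‖B‖ ^ 2 * ‖x₁ - x₂‖ := by
  rw [← ContinuousLinearMap.sub_comp, ← map_sub, ← map_sub]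
  calc _ ≤ ‖innerSL ℝ (B (x₁ - x₂))‖ * ‖B‖ := ContinuousLinearMap.opNorm_comp_le _ _
    _ = ‖B (x₁ - x₂)‖ * ‖B‖ := by rw [innerSL_apply_norm]
    _ ≤ ‖B‖ * ‖x₁ - x₂‖ * ‖B‖ := by gcongr; exact B.le_opNorm _
    _ = ‖B‖ ^ 2 * ‖x₁ - x₂‖ := by ring

end QuadraticForm

section Separable

variable {ι : Type*} [Fintype ι]

theorem hasFDerivAt_sum_comp_apply {f f' : ι → ℝ → ℝ} (hf : ∀ i z, HasDerivAt (f i) (f' i z) z)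
    (x : EuclideanSpace ℝ ι) :
    HasFDerivAt (fun z : EuclideanSpace ℝ ι => ∑ i, f i (z i))
      (innerSL ℝ (WithLp.toLp 2 fun i => f' i (x i))) x := by
  have hterm (i : ι) : HasFDerivAt (fun z : EuclideanSpace ℝ ι => f i (z i))
      (f' i (x i) • EuclideanSpace.proj i) x :=
    (hf i (x i)).comp_hasFDerivAt x (EuclideanSpace.proj (𝕜 := ℝ) i).hasFDerivAt
  refine (HasFDerivAt.fun_sum fun i _ => hterm i).congr_fderiv ?_
  ext h
  simp [PiLp.inner_apply, mul_comm]

theorem lipschitzWith_toLp_comp_apply {g : ι → ℝ → ℝ} {K : NNReal}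
    (hg : ∀ i, LipschitzWith K (g i)) :
    LipschitzWith K fun x : EuclideanSpace ℝ ι => WithLp.toLp 2 fun i => g i (x i) := by
  refine LipschitzWith.of_dist_le_mul fun x y => ?_
  rw [EuclideanSpace.dist_eq, EuclideanSpace.dist_eq, ← Real.sqrt_sq K.coe_nonneg,
    ← Real.sqrt_mul (sq_nonneg _), Finset.mul_sum]
  refine Real.sqrt_le_sqrt (Finset.sum_le_sum fun i _ => ?_)
  rw [← mul_pow]
  exact pow_le_pow_left₀ dist_nonneg ((hg i).dist_le_mul _ _) 2

end Separable

theorem norm_gradient_sub_eq {E : Type*} [NormedAddCommGroup E] [InnerProductSpace ℝ E]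
    [CompleteSpace E] {f : E → ℝ} {f' : E → StrongDual ℝ E} (hf : ∀ x, HasFDerivAt f (f' x) x)
    (x₁ x₂ : E) : ‖gradient f x₁ - gradient f x₂‖ = ‖f' x₁ - f' x₂‖ := by
  rw [← (InnerProductSpace.toDual ℝ E).norm_map, map_sub, toDual_gradient, toDual_gradient,
    (hf x₁).fderiv, (hf x₂).fderiv]

theorem Finset.sum_range_mul_eq_sum_sum {M : Type*} [AddCommMonoid M] (f : ℕ → M) (m n : ℕ) :
    ∑ k ∈ range (m * n), f k = ∑ i ∈ range m, ∑ j ∈ range n, f (i * n + j) := by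
  induction m with
  | zero => simp
  | succ m ih => rw [Nat.succ_mul, sum_range_add, ih, sum_range_succ]

theorem hasDerivAt_posPart_sq (u : ℝ) : HasDerivAt (fun v : ℝ => v⁺ ^ 2) (2 * u⁺) u := by
  refine hasDerivAt_of_hasDerivAt_of_ne' (x := 0) (g := fun v : ℝ => 2 * v⁺) (fun v hv => ?_)
    (continuous_posPart.pow 2).continuousAt (continuous_posPart.const_mul 2).continuousAt u
  rcases hv.lt_or_gt with hv | hv
  · have : (fun w : ℝ => w⁺ ^ 2) =ᶠ[nhds v] fun _ => 0 := by
      filter_upwards [eventually_lt_nhds hv] with w hw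
      simp [posPart_eq_zero.mpr hw.le]
    rw [posPart_eq_zero.mpr hv.le, mul_zero]
    exact (hasDerivAt_const v (0 : ℝ)).congr_of_eventuallyEq this
  · have : (fun w : ℝ => w⁺ ^ 2) =ᶠ[nhds v] fun w => w ^ 2 := by
      filter_upwards [eventually_gt_nhds hv] with w hw
      simp [posPart_eq_self.mpr hw.le]
    rw [posPart_eq_self.mpr hv.le]
    exact ((hasDerivAt_pow 2 v).congr_of_eventuallyEq this).congr_deriv (by norm_num)

theorem vFun_eq_posPart {y : ℝ} (hy : 0 ≤ y) (x : ℝ) :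
    vFun y x = x ^ 2 / 2 - 16 * (x - 31 / 32 * y)⁺ ^ 2 + 32 * (x - y)⁺ ^ 2
      - 16 * (x - 33 / 32 * y)⁺ ^ 2 := by
  simp only [vFun, posPart_def, max_def]
  split_ifs <;> first | (exfalso; linarith) | ring

noncomputable def vDeriv (y x : ℝ) : ℝ := x - 32 * (min (x - 31 / 32 * y) (33 / 32 * y - x))⁺

theorem hasDerivAt_vFun {y : ℝ} (hy : 0 ≤ y) (x : ℝ) : HasDerivAt (vFun y) (vDeriv y x) x := by
  have hramp (c : ℝ) : HasDerivAt (fun z : ℝ => (z - c)⁺ ^ 2) (2 * (x - c)⁺) x :=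
    (hasDerivAt_posPart_sq (x - c)).comp_sub_const x c
  have hsq : HasDerivAt (fun z : ℝ => z ^ 2 / 2) x x := by
    simpa using (hasDerivAt_pow 2 x).div_const 2
  rw [funext (vFun_eq_posPart hy)]
  refine (((hsq.sub ((hramp (31 / 32 * y)).const_mul 16)).add ((hramp y).const_mul 32)).sub
    ((hramp (33 / 32 * y)).const_mul 16)).congr_deriv ?_
  simp only [vDeriv, posPart_def, max_def, min_def]
  split_ifs <;> linarith

theorem lipschitzWith_vDeriv (y : ℝ) : LipschitzWith 33 (vDeriv y) := by
  refine LipschitzWith.of_dist_le_mul fun s u => ?_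
  wlog h : u ≤ s generalizing s u
  · rw [dist_comm, dist_comm s]
    exact this u s (le_of_not_ge h)
  rw [NNReal.coe_ofNat, Real.dist_eq, Real.dist_eq, abs_of_nonneg (sub_nonneg.mpr h)]
  simp only [vDeriv, posPart_def, max_def, min_def, abs_le]
  split_ifs <;> constructor <;> linarith

section Chain

variable {n : ℕ}

theorem coord_add (x y : EuclideanSpace ℝ (Fin n)) (k : ℕ) :
    coord (x + y) k = coord x k + coord y k := by
  unfold coord; split_ifs <;> simp

theorem coord_smul (a : ℝ) (x : EuclideanSpace ℝ (Fin n)) (k : ℕ) :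
    coord (a • x) k = a * coord x k := by
  unfold coord; split_ifs <;> simp

theorem coord_succ (x : EuclideanSpace ℝ (Fin n)) (k : Fin n) : coord x (k + 1) = x k := by
  simp [coord]

theorem sum_coord_sq_le (x : EuclideanSpace ℝ (Fin n)) : ∑ k : Fin n, coord x k ^ 2 ≤ ‖x‖ ^ 2 := by
  rw [EuclideanSpace.real_norm_sq_eq]
  cases n with
  | zero => simp
  | succ m =>
    rw [Fin.sum_univ_succ, Fin.sum_univ_castSucc]
    have hs (i : Fin m) : coord x i.succ = x i.castSucc := by simpa using coord_succ x i.castSucc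
    have h0 : coord x (0 : Fin (m + 1)) = 0 := by simp [coord]
    simp only [h0, hs]
    nlinarith [sq_nonneg (x (Fin.last m))]

noncomputable def chainMap (n : ℕ) (c : ℕ → ℝ) :
    EuclideanSpace ℝ (Fin n) →L[ℝ] EuclideanSpace ℝ (Fin n) :=
  LinearMap.toContinuousLinearMap
    { toFun := fun x => WithLp.toLp 2 fun k => c k * coord x k - x k
      map_add' := fun x y => by ext k; simp only [coord_add, PiLp.add_apply]; ring
      map_smul' := fun a x => by
        ext k; simp only [coord_smul, PiLp.smul_apply, smul_eq_mul, RingHom.id_apply]; ring }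

@[simp]
theorem chainMap_apply (c : ℕ → ℝ) (x : EuclideanSpace ℝ (Fin n)) (k : Fin n) :
    chainMap n c x k = c k * coord x k - x k := rfl

theorem norm_chainMap_le {c : ℕ → ℝ} (hc : ∀ k, |c k| ≤ 1) : ‖chainMap n c‖ ≤ 2 := by
  refine ContinuousLinearMap.opNorm_le_bound _ zero_le_two fun x => ?_
  rw [← pow_le_pow_iff_left₀ (norm_nonneg _) (by positivity) two_ne_zero]
  have hterm (k : Fin n) : (c k * coord x k - x k) ^ 2 ≤ 2 * coord x k ^ 2 + 2 * x k ^ 2 := by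
    have hc2 : c k ^ 2 ≤ 1 := by rw [← sq_abs]; exact pow_le_one₀ (abs_nonneg _) (hc k)
    nlinarith [sq_nonneg (c k * coord x k + x k),
      mul_le_mul_of_nonneg_right hc2 (sq_nonneg (coord x k))]
  calc ‖chainMap n c x‖ ^ 2 = ∑ k : Fin n, (c k * coord x k - x k) ^ 2 := by
        simp [EuclideanSpace.real_norm_sq_eq]
    _ ≤ ∑ k : Fin n, (2 * coord x k ^ 2 + 2 * x k ^ 2) := Finset.sum_le_sum fun k _ => hterm k
    _ = 2 * ∑ k : Fin n, coord x k ^ 2 + 2 * ‖x‖ ^ 2 := by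
        rw [Finset.sum_add_distrib, ← Finset.mul_sum, ← Finset.mul_sum,
          EuclideanSpace.real_norm_sq_eq]
    _ ≤ (2 * ‖x‖) ^ 2 := by nlinarith [sum_coord_sq_le x]

end Chain

noncomputable def qChain (T t : ℕ) :
    EuclideanSpace ℝ (Fin (T * t)) →L[ℝ] EuclideanSpace ℝ (Fin (T * t)) :=
  chainMap (T * t) fun k => if T ∣ k then 7 / 8 else 1

theorem norm_qChain_le (T t : ℕ) : ‖qChain T t‖ ≤ 2 :=
  norm_chainMap_le fun k => by split_ifs <;> norm_num [abs_of_pos]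

open Finset in
theorem qFun_eq_norm_qChain_sq (T t : ℕ) (hT : 0 < T) (x : EuclideanSpace ℝ (Fin (T * t))) :
    qFun T t x = ‖qChain T t x‖ ^ 2 / 2 := by
  set c : ℕ → ℝ := fun k => if T ∣ k then 7 / 8 else 1
  have hnorm : ‖qChain T t x‖ ^ 2
      = ∑ k ∈ range (t * T), (c k * coord x k - coord x (k + 1)) ^ 2 := by
    rw [EuclideanSpace.real_norm_sq_eq, mul_comm t T, ← Fin.sum_univ_eq_sum_range]
    simp [qChain, c, coord_succ]
  have hblock (i : ℕ) : (7 / 8 * coord x (i * T) - coord x (i * T + 1)) ^ 2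
      + ∑ j ∈ Icc 1 (T - 1), (coord x (i * T + j + 1) - coord x (i * T + j)) ^ 2
      = ∑ j ∈ range T, (c (i * T + j) * coord x (i * T + j) - coord x (i * T + j + 1)) ^ 2 := by
    rw [show range T = insert 0 (Icc 1 (T - 1)) by ext j; simp; omega, sum_insert (by simp)]
    congr 1
    · simp [c]
    · refine sum_congr rfl fun j hj => ?_
      rw [mem_Icc] at hj
      have : ¬T ∣ i * T + j := by
        rw [Nat.dvd_add_right (dvd_mul_left T i)]
        exact Nat.not_dvd_of_pos_of_lt (by omega) (by omega)
      simp only [c, if_neg this]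
      ring
  rw [hnorm, sum_range_mul_eq_sum_sum, qFun]
  simp only [hblock]
  ring

noncomputable def vGradient (T t : ℕ) (x : EuclideanSpace ℝ (Fin (T * t))) :
    EuclideanSpace ℝ (Fin (T * t)) :=
  WithLp.toLp 2 fun i => vDeriv (yVec T t i) (x i)

theorem hasFDerivAt_gFun (T t : ℕ) (hT : 0 < T) (x : EuclideanSpace ℝ (Fin (T * t))) :
    HasFDerivAt (gFun T t)
      ((innerSL ℝ (qChain T t x)).comp (qChain T t) + innerSL ℝ (vGradient T t x)) x := by
  have hg : gFun T t = fun z => ‖qChain T t z‖ ^ 2 / 2 + ∑ i, vFun (yVec T t i) (z i) :=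
    funext fun z => by rw [gFun, qFun_eq_norm_qChain_sq T t hT]
  rw [hg]
  exact (hasFDerivAt_norm_sq_comp_div_two _ x).add <| hasFDerivAt_sum_comp_apply
    (fun i => hasDerivAt_vFun (pow_nonneg (by norm_num) _ : (0 : ℝ) ≤ yVec T t i)) x

theorem lipschitzWith_vGradient (T t : ℕ) : LipschitzWith 33 (vGradient T t) :=
  lipschitzWith_toLp_comp_apply fun i => lipschitzWith_vDeriv (yVec T t i)

theorem gFun_smooth_general (T t : ℕ) (hT : 0 < T) :
    Differentiable ℝ (gFun T t) ∧
    ∀ x₁ x₂ : EuclideanSpace ℝ (Fin (T * t)),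
      ‖gradient (gFun T t) x₁ - gradient (gFun T t) x₂‖ ≤ 37 * ‖x₁ - x₂‖ := by
  set B := qChain T t
  have hderiv := hasFDerivAt_gFun T t hT
  refine ⟨fun x => (hderiv x).differentiableAt, fun x₁ x₂ => ?_⟩
  have hv : ‖vGradient T t x₁ - vGradient T t x₂‖ ≤ 33 * ‖x₁ - x₂‖ := by
    simpa [dist_eq_norm] using (lipschitzWith_vGradient T t).dist_le_mul x₁ x₂
  rw [norm_gradient_sub_eq hderiv, add_sub_add_comm, ← map_sub]
  calc _ ≤ ‖(innerSL ℝ (B x₁)).comp B - (innerSL ℝ (B x₂)).comp B‖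
          + ‖innerSL ℝ (vGradient T t x₁ - vGradient T t x₂)‖ := norm_add_le _ _
    _ ≤ ‖B‖ ^ 2 * ‖x₁ - x₂‖ + 33 * ‖x₁ - x₂‖ := by
        rw [innerSL_apply_norm]
        exact add_le_add (norm_innerSL_comp_sub_le B x₁ x₂) hv
    _ ≤ (2 ^ 2 + 33) * ‖x₁ - x₂‖ := by rw [← add_mul]; gcongr; exact norm_qChain_le T t
    _ = 37 * ‖x₁ - x₂‖ := by norm_num

/-- For all positive `T, t`, the hard instance `g_{T,t}` is `37`-smooth:
differentiable with `37`-Lipschitz gradient. -/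
theorem gFun_smooth (T t : ℕ) (hT : 0 < T) (ht : 0 < t) :
    Differentiable ℝ (gFun T t) ∧
    ∀ x₁ x₂ : EuclideanSpace ℝ (Fin (T * t)),
      ‖gradient (gFun T t) x₁ - gradient (gFun T t) x₂‖ ≤ 37 * ‖x₁ - x₂‖ :=
  gFun_smooth_general T t hT
end

section
/- For all positive integers T, t, the value of g_{T,t} at the vector y satisfies g_{T,t}(y) = 1/2 + (31/64)·T·Σ_{i=0}^{t−1}(7/8)^{2i} = 1/2 + (31/15)·T·(1 − (49/64)^t) ≤ 3T. -/
/-! The point `y` sits on the kink of every `v_{y_i}`, where `v_y(y) = (31/64) y²`; summing over the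
`T` coordinates of each block gives `(31/64) T Σ_q (49/64)^q`. In `q_{T,t}` all differences inside a
block vanish, and so do the jumps `(7/8) y_{qT} - y_{qT+1}` between consecutive blocks, so only the
first term `(0 - y_1)² = 1` survives, contributing `1/2`. The closed form is the geometric sum. -/

theorem Finset.sum_range_mul_comp_div {M : Type*} [AddCommMonoid M] (f : ℕ → M) (T t : ℕ) :
    ∑ i ∈ range (T * t), f (i / T) = T • ∑ q ∈ range t, f q := by
  induction t with
  | zero => simp
  | succ n ih =>
    have hblock : ∀ k ∈ range T, f ((T * n + k) / T) = f n := fun k hk => by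
      rw [mem_range] at hk
      rw [Nat.mul_add_div (by omega), Nat.div_eq_of_lt hk, Nat.add_zero]
    rw [Nat.mul_succ, sum_range_add, ih, sum_congr rfl hblock, sum_const, card_range,
      sum_range_succ, smul_add]

lemma vFun_self {y : ℝ} (hy : 0 < y) : vFun y y = 31 / 64 * y ^ 2 := by
  rw [vFun, if_neg (by linarith), if_pos le_rfl]
  ring

lemma coord_zero {d : ℕ} (x : EuclideanSpace ℝ (Fin d)) : coord x 0 = 0 := by
  simp [coord]

lemma coord_yVec_block {T t i j : ℕ} (hi : i < t) (hj₁ : 1 ≤ j) (hj₂ : j ≤ T) :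
    coord (yVec T t) (i * T + j) = (7 / 8 : ℝ) ^ i := by
  have hle : i * T + j ≤ T * t := by nlinarith
  rw [coord, dif_pos ⟨by omega, hle⟩]
  change (7 / 8 : ℝ) ^ ((i * T + j - 1) / T) = _
  rw [show i * T + j - 1 = T * i + (j - 1) by rw [mul_comm]; omega,
    Nat.mul_add_div (by omega), Nat.div_eq_of_lt (by omega), Nat.add_zero]

lemma qFun_yVec {T t : ℕ} (hT : 0 < T) (ht : 0 < t) : qFun T t (yVec T t) = 1 / 2 := by
  have hblock : ∀ i ∈ Finset.range t,
      (7 / 8 * coord (yVec T t) (i * T) - coord (yVec T t) (i * T + 1)) ^ 2 +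
        ∑ j ∈ Finset.Icc 1 (T - 1),
          (coord (yVec T t) (i * T + j + 1) - coord (yVec T t) (i * T + j)) ^ 2 =
      if i = 0 then 1 else 0 := by
    intro i hi
    rw [Finset.mem_range] at hi
    have hflat : ∀ j ∈ Finset.Icc 1 (T - 1),
        (coord (yVec T t) (i * T + j + 1) - coord (yVec T t) (i * T + j)) ^ 2 = 0 := by
      intro j hj
      rw [Finset.mem_Icc] at hj
      rw [add_assoc, coord_yVec_block hi (by omega) (by omega),
        coord_yVec_block hi hj.1 (by omega), sub_self, sq, zero_mul]
    rw [Finset.sum_eq_zero hflat, add_zero, coord_yVec_block hi le_rfl hT]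
    rcases i with _ | s
    · simp [coord_zero]
    · rw [Nat.succ_mul, coord_yVec_block (by omega) hT le_rfl, if_neg s.succ_ne_zero, pow_succ]
      ring
  rw [qFun, Finset.sum_congr rfl hblock, Finset.sum_ite_eq' _ _ (fun _ => (1 : ℝ)),
    if_pos (Finset.mem_range.mpr ht), mul_one]

lemma sum_vFun_yVec (T t : ℕ) :
    ∑ i : Fin (T * t), vFun (yVec T t i) (yVec T t i) =
      31 / 64 * T * ∑ q ∈ Finset.range t, (49 / 64 : ℝ) ^ q := by
  have hv : ∀ i : Fin (T * t),
      vFun (yVec T t i) (yVec T t i) = 31 / 64 * (49 / 64 : ℝ) ^ ((i : ℕ) / T) := fun i => by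
    change vFun ((7 / 8 : ℝ) ^ ((i : ℕ) / T)) ((7 / 8) ^ ((i : ℕ) / T)) = _
    rw [vFun_self (by positivity), ← pow_mul, pow_mul']
    norm_num
  rw [Finset.sum_congr rfl fun i _ => hv i,
    Fin.sum_univ_eq_sum_range (fun i => 31 / 64 * (49 / 64 : ℝ) ^ (i / T)), ← Finset.mul_sum,
    Finset.sum_range_mul_comp_div, nsmul_eq_mul, mul_assoc]

lemma gFun_yVec {T t : ℕ} (hT : 0 < T) (ht : 0 < t) :
    gFun T t (yVec T t) = 1 / 2 + 31 / 64 * T * ∑ q ∈ Finset.range t, (49 / 64 : ℝ) ^ q := by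
  rw [gFun, qFun_yVec hT ht, sum_vFun_yVec]

/-- The value of `g_{T,t}` at the reference vector `y`:
`g_{T,t}(y) = 1/2 + (31/64)·T·Σ_{i=0}^{t-1}(7/8)^{2i} = 1/2 + (31/15)·T·(1-(49/64)^t) ≤ 3T`. -/
theorem gFun_value_at_yVec (T t : ℕ) (hT : 0 < T) (ht : 0 < t) :
    gFun T t (yVec T t) =
      1 / 2 + 31 / 64 * (T : ℝ) * ∑ i ∈ Finset.range t, (7 / 8 : ℝ) ^ (2 * i) ∧
    gFun T t (yVec T t) = 1 / 2 + 31 / 15 * (T : ℝ) * (1 - (49 / 64 : ℝ) ^ t) ∧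
    gFun T t (yVec T t) ≤ 3 * (T : ℝ) := by
  have hsquare : ∀ i, (7 / 8 : ℝ) ^ (2 * i) = (49 / 64) ^ i := fun i => by
    rw [pow_mul]; norm_num
  have hgeom : ∑ q ∈ Finset.range t, (49 / 64 : ℝ) ^ q = 64 / 15 * (1 - (49 / 64) ^ t) := by
    rw [geom_sum_eq (by norm_num)]; ring
  have hclosed : gFun T t (yVec T t) = 1 / 2 + 31 / 15 * (T : ℝ) * (1 - (49 / 64 : ℝ) ^ t) := by
    rw [gFun_yVec hT ht, hgeom]; ring
  refine ⟨by simp only [hsquare, gFun_yVec hT ht], hclosed, ?_⟩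
  have hT1 : (1 : ℝ) ≤ T := by exact_mod_cast hT
  have hpow : (0 : ℝ) ≤ (49 / 64) ^ t := by positivity
  rw [hclosed]
  nlinarith
end
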